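/- Let 𝕋 be a time scale, f : 𝕋 → ℝ, and t₀ ∈ 𝕋. Suppose f is delta differentiable at t₀ with delta derivative L, meaning: for every ε > 0 there is a neighborhood U of t₀ in 𝕋 such that |f(σ(t₀)) - f(s) - L(σ(t₀) - s)| ≤ ε|σ(t₀) - s| for all s ∈ U. Then the dual function f*(s) := f(-s) on 𝕋* is nabla differentiable at -t₀ with nabla derivative -L, meaning: for every ε > 0 there is a neighborhood V of -t₀ in 𝕋* such that |f*(ρ̂(-t₀)) - f*(s) - (-L)(ρ̂(-t₀) - s)| ≤ ε|ρ̂(-t₀) - s| for all s ∈ V. -/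
import Mathlib


open scoped Classical

def tsDual (T : Set ℝ) : Set ℝ := {s : ℝ | -s ∈ T}

noncomputable def tsSigma (T : Set ℝ) (t : ℝ) : ℝ :=
  if ({s | s ∈ T ∧ t < s}).Nonempty then sInf {s | s ∈ T ∧ t < s} else t

noncomputable def tsRho (T : Set ℝ) (t : ℝ) : ℝ :=
  if ({s | s ∈ T ∧ s < t}).Nonempty then sSup {s | s ∈ T ∧ s < t} else t

lemma tsRho_dual (T : Set ℝ) (t₀ : ℝ) :
    tsRho (tsDual T) (-t₀) = -(tsSigma T t₀) := by
  have hset : {s | s ∈ tsDual T ∧ s < -t₀} = -{s | s ∈ T ∧ t₀ < s} := by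
    ext x
    simp only [Set.mem_setOf_eq, Set.mem_neg, tsDual]
    constructor
    · rintro ⟨h1, h2⟩; exact ⟨h1, by linarith⟩
    · rintro ⟨h1, h2⟩; exact ⟨h1, by linarith⟩
  rw [tsRho, tsSigma, hset]
  by_cases h : ({s | s ∈ T ∧ t₀ < s}).Nonempty
  · rw [if_pos (by exact ⟨-h.choose, by simpa using h.choose_spec⟩),
      if_pos h]
    have := Real.sInf_def {s | s ∈ T ∧ t₀ < s}
    linarith
  · rw [if_neg (by
      rintro ⟨x, hx⟩
      exact h ⟨-x, hx⟩), if_neg h]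

theorem dual_delta_nabla_deriv (T : Set ℝ) (hne : T.Nonempty) (hcl : IsClosed T)
    (f : ℝ → ℝ) (t₀ : ℝ) (ht₀ : t₀ ∈ T) (L : ℝ)
    (hdelta : ∀ ε > (0 : ℝ), ∃ U ∈ nhdsWithin t₀ T, ∀ s ∈ U ∩ T,
      |f (tsSigma T t₀) - f s - L * (tsSigma T t₀ - s)| ≤ ε * |tsSigma T t₀ - s|) :
    ∀ ε > (0 : ℝ), ∃ V ∈ nhdsWithin (-t₀) (tsDual T), ∀ s ∈ V ∩ tsDual T,
      |(fun u => f (-u)) (tsRho (tsDual T) (-t₀)) - (fun u => f (-u)) s -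
        (-L) * (tsRho (tsDual T) (-t₀) - s)| ≤ ε * |tsRho (tsDual T) (-t₀) - s| := by
  intro ε hε
  obtain ⟨U, hU, hbound⟩ := hdelta ε hε
  have hmaps : Set.MapsTo (fun x : ℝ => -x) (tsDual T) T := fun x hx => hx
  have htend : Filter.Tendsto (fun x : ℝ => -x) (nhdsWithin (-t₀) (tsDual T))
      (nhdsWithin t₀ T) := by
    have hc : ContinuousWithinAt (fun x : ℝ => -x) (tsDual T) (-t₀) :=
      (continuous_neg.continuousWithinAt)
    simpa using hc.tendsto_nhdsWithin hmaps
  refine ⟨(fun x : ℝ => -x) ⁻¹' U, htend hU, ?_⟩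
  rintro s ⟨hsV, hsT⟩
  have h := hbound (-s) ⟨hsV, hsT⟩
  rw [tsRho_dual]
  simp only []
  have e1 : -(-(tsSigma T t₀)) = tsSigma T t₀ := by ring
  rw [e1]
  have e2 : -L * (-(tsSigma T t₀) - s) = L * (tsSigma T t₀ - -s) := by ring
  have e3 : |(-(tsSigma T t₀) - s)| = |tsSigma T t₀ - -s| := by
    rw [abs_sub_comm]; congr 1; ring
  rw [e2, e3]
  exact h
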